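/- The 4-ary Boolean relation R = { (x₁,x₂,c₀,c₁) ∈ Bool⁴ | (x₁ → x₂) ∧ (c₀ = 0) ∧ (c₁ = 1) } = { (0,0,0,1), (0,1,0,1), (1,1,0,1) } is a weak base of the co-clone it generates (this co-clone is IM₂ in Post's lattice): for every finite set Δ of Boolean relations with Pol(Δ) = Pol({R}) one has pPol(Δ) ⊆ pPol({R}). -/

import Mathlib

/-- A Boolean relation of arity `k`: a set of `k`-tuples over `Bool`. -/
abbrev BRel (k : ℕ) := Set (Fin k → Bool)

/-- A total `m`-ary Boolean operation `f` preserves a `k`-ary relation `R`. -/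
def Preserves {m k : ℕ} (f : (Fin m → Bool) → Bool) (R : BRel k) : Prop :=
  ∀ ts : Fin m → Fin k → Bool, (∀ j, ts j ∈ R) → (fun i => f (fun j => ts j i)) ∈ R

/-- A partial `m`-ary Boolean operation (modelled with `Option Bool`; `none` =
undefined) preserves a `k`-ary relation `R`. -/
def PPreserves {m k : ℕ} (f : (Fin m → Bool) → Option Bool) (R : BRel k) : Prop :=
  ∀ ts : Fin m → Fin k → Bool, (∀ j, ts j ∈ R) →
    ∀ u : Fin k → Bool, (∀ i, f (fun j => ts j i) = some (u i)) → u ∈ R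

/-- The set of all (finitary, total) polymorphisms of a set of relations. -/
def Pol (Γ : Set (Σ k, BRel k)) : Set (Σ m, (Fin m → Bool) → Bool) :=
  { f | ∀ R ∈ Γ, Preserves f.2 R.2 }

/-- The set of all partial polymorphisms of a set of relations. -/
def pPol (Γ : Set (Σ k, BRel k)) : Set (Σ m, (Fin m → Bool) → Option Bool) :=
  { f | ∀ R ∈ Γ, PPreserves f.2 R.2 }

/-- `R` is a weak base of the co-clone it generates: every finite `Δ` with the
same polymorphisms as `R` satisfies `pPol Δ ⊆ pPol {R}`. -/
def IsWeakBase {k : ℕ} (R : BRel k) : Prop :=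
  ∀ Δ : Set (Σ k, BRel k), Δ.Finite →
    Pol Δ = Pol {⟨k, R⟩} → pPol Δ ⊆ pPol {⟨k, R⟩}

/-!
The polymorphisms of `R` are the monotone operations fixing both constants. For rows
`t₁, …, t_m ∈ R`, the columns `0̄ ≤ (t_j 0)_j ≤ (t_j 1)_j ≤ 1̄` form a chain, which is the image
of `Bool³` under the monotone, constant-preserving map `v ↦ v₂ ∨ (v₁ ∧ t_j 1) ∨ (v₀ ∧ t_j 0)`
applied in every coordinate `j`. Composing a partial polymorphism `f` of `Δ` with this map gives
a total ternary operation; it preserves `Δ`, hence `R`, and evaluated on the rows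
`(1,1,0,1), (0,1,0,1), (0,0,0,1)` it returns `f(t₁, …, t_m)`, which therefore lies in `R`.
-/

theorem PPreserves.preserves_of_comp {m n k : ℕ} {f : (Fin m → Bool) → Option Bool}
    {S : BRel k} (hf : PPreserves f S) {Φ : Fin m → (Fin n → Bool) → Bool}
    (hΦ : ∀ j, Preserves (Φ j) S) {h : (Fin n → Bool) → Bool}
    (hcomp : ∀ v, f (fun j => Φ j v) = some (h v)) : Preserves h S :=
  fun ts hts => hf (fun j i => Φ j fun l => ts l i) (fun j => hΦ j ts hts) _ fun _ => hcomp _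

theorem preserves_of_mem_pPol_of_comp {Δ : Set (Σ k, BRel k)} {k : ℕ} {R : BRel k}
    (hpol : Pol Δ = Pol {⟨k, R⟩}) {f : Σ m, (Fin m → Bool) → Option Bool} (hf : f ∈ pPol Δ)
    {n : ℕ} {Φ : Fin f.1 → (Fin n → Bool) → Bool} (hΦ : ∀ j, Preserves (Φ j) R)
    {h : (Fin n → Bool) → Bool} (hcomp : ∀ v, f.2 (fun j => Φ j v) = some (h v)) :
    Preserves h R := by
  have mem_pol : ∀ {m} (g : (Fin m → Bool) → Bool), ⟨m, g⟩ ∈ Pol Δ ↔ Preserves g R := by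
    intro m g
    rw [hpol]
    simp [Pol]
  exact (mem_pol h).1 fun S hS =>
    (hf S hS).preserves_of_comp (fun j => (mem_pol (Φ j)).2 (hΦ j) S hS) hcomp

def relIM2 : BRel 4 := { t | (t 0 = true → t 1 = true) ∧ t 2 = false ∧ t 3 = true }

theorem preserves_relIM2_of_monotone {n : ℕ} {g : (Fin n → Bool) → Bool} (hg : Monotone g)
    (h0 : g (fun _ => false) = false) (h1 : g (fun _ => true) = true) : Preserves g relIM2 := by
  intro ts hts
  refine ⟨Bool.le_iff_imp.1 (hg fun j => Bool.le_iff_imp.2 (hts j).1), ?_, ?_⟩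
  · simpa only [(hts _).2.1] using h0
  · simpa only [(hts _).2.2] using h1

def chain (x : Fin 4 → Bool) (v : Fin 3 → Bool) : Bool :=
  v 2 || v 1 && x 1 || v 0 && x 0

def chainIndex (v : Fin 3 → Bool) : Fin 4 :=
  if v 2 then 3 else if v 1 then 1 else if v 0 then 0 else 2

theorem preserves_chain (x : Fin 4 → Bool) : Preserves (chain x) relIM2 := by
  refine preserves_relIM2_of_monotone (fun v w hvw => ?_) (by simp [chain]) (by simp [chain])
  have h0 := Bool.le_iff_imp.1 (hvw 0)
  have h1 := Bool.le_iff_imp.1 (hvw 1)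
  have h2 := Bool.le_iff_imp.1 (hvw 2)
  simp only [chain, Bool.le_iff_imp, Bool.or_eq_true, Bool.and_eq_true]
  tauto

theorem chain_eq_apply_chainIndex {x : Fin 4 → Bool} (hx : x ∈ relIM2) (v : Fin 3 → Bool) :
    chain x v = x (chainIndex v) := by
  obtain ⟨h01, h2, h3⟩ := hx
  cases hv2 : v 2 <;> cases hv1 : v 1 <;> cases hv0 : v 0 <;> cases hx0 : x 0 <;>
    simp_all [chain, chainIndex]

theorem stmt13 :
    IsWeakBase { t : Fin 4 → Bool |
      (t 0 = true → t 1 = true) ∧ t 2 = false ∧ t 3 = true } := by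
  show IsWeakBase relIM2
  rintro Δ - hpol f hf S rfl ts hts u hu
  have hcomposite : Preserves (fun v => u (chainIndex v)) relIM2 :=
    preserves_of_mem_pPol_of_comp hpol hf (fun j => preserves_chain (ts j)) fun v => by
      simpa only [chain_eq_apply_chainIndex (hts _)] using hu (chainIndex v)
  -- the `i`-th column of these rows has `chainIndex` equal to `i`
  have hrows := hcomposite ![![true, true, false, true], ![false, true, false, true],
    ![false, false, false, true]] fun j => by fin_cases j <;> simp [relIM2]
  convert hrows using 1
  funext i
  fin_cases i <;> rfl
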